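/- Let η : Matrix (Fin 4) (Fin 4) ℝ be the Minkowski metric diag(1,−1,−1,−1), let p : Fin 4 → ℝ with p² := ∑_{μ,ν} p μ · η μ ν · p ν ≠ 0, let q μ := ∑_ν η μ ν · p ν, and define ω μ ν := q μ · q ν / p², θ μ ν := η μ ν − ω μ ν. Define the Nieuwenhuizen operators P⁰ μ ν α β := (1/3) θ μ ν · θ α β, P̄⁰ μ ν α β := ω μ ν · ω α β, P¹ μ ν α β := (1/2)(θ μ α · ω ν β + θ μ β · ω ν α + θ ν α · ω μ β + θ ν β · ω μ α), and P² μ ν α β := (1/2)(θ μ α · θ ν β + θ μ β · θ ν α) − (1/3) θ μ ν · θ α β. Then for all μ ν α β, P⁰ μ ν α β + P¹ μ ν α β + P² μ ν α β + P̄⁰ μ ν α β = (η μ α · η ν β + η μ β · η ν α)/2. -/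
import Mathlib

/-- The Minkowski metric `diag(1, −1, −1, −1)` on `Fin 4`. -/
noncomputable def minkowski : Matrix (Fin 4) (Fin 4) ℝ :=
  Matrix.diagonal ![1, -1, -1, -1]

/-- `p² = ∑ p_μ η^{μν} p_ν`. -/
noncomputable def pSq (p : Fin 4 → ℝ) : ℝ :=
  ∑ μ : Fin 4, ∑ ν : Fin 4, p μ * minkowski μ ν * p ν

/-- The lowered momentum `q_μ = η_{μν} p^ν`. -/
noncomputable def pLow (p : Fin 4 → ℝ) (μ : Fin 4) : ℝ :=
  ∑ ν : Fin 4, minkowski μ ν * p ν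

/-- The longitudinal projector `ω_{μν} = p_μ p_ν / p²`. -/
noncomputable def omegaP (p : Fin 4 → ℝ) (μ ν : Fin 4) : ℝ :=
  pLow p μ * pLow p ν / pSq p

/-- The transverse projector `θ_{μν} = η_{μν} − ω_{μν}`. -/
noncomputable def thetaP (p : Fin 4 → ℝ) (μ ν : Fin 4) : ℝ :=
  minkowski μ ν - omegaP p μ ν

/-- Nieuwenhuizen operator `P⁰_{μναβ} = (1/3) θ_{μν} θ_{αβ}`. -/
noncomputable def nieuwP0 (p : Fin 4 → ℝ) (μ ν α β : Fin 4) : ℝ :=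
  (1 / 3) * thetaP p μ ν * thetaP p α β

/-- Nieuwenhuizen operator `P̄⁰_{μναβ} = ω_{μν} ω_{αβ}`. -/
noncomputable def nieuwP0Bar (p : Fin 4 → ℝ) (μ ν α β : Fin 4) : ℝ :=
  omegaP p μ ν * omegaP p α β

/-- Nieuwenhuizen operator
`P¹_{μναβ} = ½(θ_{μα} ω_{νβ} + θ_{μβ} ω_{να} + θ_{να} ω_{μβ} + θ_{νβ} ω_{μα})`. -/
noncomputable def nieuwP1 (p : Fin 4 → ℝ) (μ ν α β : Fin 4) : ℝ :=
  (1 / 2) * (thetaP p μ α * omegaP p ν β + thetaP p μ β * omegaP p ν α +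
    thetaP p ν α * omegaP p μ β + thetaP p ν β * omegaP p μ α)

/-- Nieuwenhuizen operator
`P²_{μναβ} = ½(θ_{μα} θ_{νβ} + θ_{μβ} θ_{να}) − (1/3) θ_{μν} θ_{αβ}`. -/
noncomputable def nieuwP2 (p : Fin 4 → ℝ) (μ ν α β : Fin 4) : ℝ :=
  (1 / 2) * (thetaP p μ α * thetaP p ν β + thetaP p μ β * thetaP p ν α) -
    (1 / 3) * thetaP p μ ν * thetaP p α β

/-- **Completeness of the Nieuwenhuizen operators.**
For `p² ≠ 0`, `P⁰ + P¹ + P² + P̄⁰` is the identity symmetrizer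
`½(η_{μα}η_{νβ} + η_{μβ}η_{να})` on symmetric rank-2 tensors. -/
theorem nieuwenhuizen_completeness (p : Fin 4 → ℝ) (hp : pSq p ≠ 0) (μ ν α β : Fin 4) :
    nieuwP0 p μ ν α β + nieuwP1 p μ ν α β + nieuwP2 p μ ν α β + nieuwP0Bar p μ ν α β =
      (minkowski μ α * minkowski ν β + minkowski μ β * minkowski ν α) / 2 := by
  unfold nieuwP0 nieuwP1 nieuwP2 nieuwP0Bar thetaP omegaP
  field_simp
  ring
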